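/- Let 0 < β < 1/2. Then for nonnegative measurable g on (0,∞): ∫_0^∞ ∫_0^∞ g(s) g(s₁) (s+s₁)^{-(1-2β)} s^{-β} s₁^{-β} ds ds₁ ≲ ∫_0^∞ g(s)² ds. -/

import Mathlib

/-! Schur's test with the weight `w t = t^{-1/2}`. By AM–GM,
`2 g(s) g(t) K(s,t) ≤ g(s)² K(s,t) w(t)/w(s) + g(t)² K(s,t) w(s)/w(t)`, and since the kernel
`K(s,t) = (s+t)^{2β-1} s^{-β} t^{-β}` is symmetric, both terms integrate to the same quantity,
which is at most `C ∫ g²` as soon as `∫ K(s,t) w(t) dt ≤ C w(s)`. Splitting that integral at `t = s`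
and bounding `(s+t)^{2β-1}` by `s^{2β-1}`, resp. `t^{2β-1}`, leaves two power integrals, convergent
at `0`, resp. `∞`, exactly because `β < 1/2`. -/

open MeasureTheory Real Set
open scoped ENNReal

noncomputable section

/-- The fractional heat kernel `K_t^α = 𝓕⁻¹(e^{-t|ξ|^{2α}})` on `ℝⁿ`. -/
def fracHeatKernel (n : ℕ) (α t : ℝ) : EuclideanSpace ℝ (Fin n) → ℂ :=
  VectorFourier.fourierIntegral Real.fourierChar volume (-innerₗ (EuclideanSpace ℝ (Fin n))) fun ξ : EuclideanSpace ℝ (Fin n) =>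
    (Real.exp (-t * ‖ξ‖ ^ (2 * α)) : ℂ)

/-- The fractional heat semigroup `e^{-t(-Δ)^α} f = K_t^α * f` (convolution form). -/
def fracHeat (n : ℕ) (α t : ℝ) (f : EuclideanSpace ℝ (Fin n) → ℂ)
    (x : EuclideanSpace ℝ (Fin n)) : ℂ :=
  ∫ y, fracHeatKernel n α t (x - y) * f y

/-- The fractional heat semigroup `e^{-t(-Δ)^α} f = 𝓕⁻¹(e^{-t|ξ|^{2α}} 𝓕 f)` (Fourier form). -/
def fracHeatF (n : ℕ) (α t : ℝ) (f : EuclideanSpace ℝ (Fin n) → ℂ) :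
    EuclideanSpace ℝ (Fin n) → ℂ :=
  VectorFourier.fourierIntegral Real.fourierChar volume (-innerₗ (EuclideanSpace ℝ (Fin n))) fun ξ : EuclideanSpace ℝ (Fin n) =>
    Real.exp (-t * ‖ξ‖ ^ (2 * α)) • VectorFourier.fourierIntegral Real.fourierChar volume (innerₗ (EuclideanSpace ℝ (Fin n))) f ξ

/-- The fractional Laplacian `(-Δ)^β f = 𝓕⁻¹(|ξ|^{2β} 𝓕 f)`. -/
def fracLap (n : ℕ) (β : ℝ) (f : EuclideanSpace ℝ (Fin n) → ℂ) :
    EuclideanSpace ℝ (Fin n) → ℂ :=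
  VectorFourier.fourierIntegral Real.fourierChar volume (-innerₗ (EuclideanSpace ℝ (Fin n))) fun ξ : EuclideanSpace ℝ (Fin n) =>
    (‖ξ‖ ^ (2 * β)) • VectorFourier.fourierIntegral Real.fourierChar volume (innerₗ (EuclideanSpace ℝ (Fin n))) f ξ

/-- The Duhamel term `∫_0^t e^{-(t-s)(-Δ)^α} F(s,·) ds`. -/
def duhamel (n : ℕ) (α : ℝ) (F : ℝ → EuclideanSpace ℝ (Fin n) → ℂ)
    (t : ℝ) (x : EuclideanSpace ℝ (Fin n)) : ℂ :=
  ∫ s in Ioc (0 : ℝ) t, fracHeat n α (t - s) (F s) x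

/-- The mixed space-time norm `‖u‖_{L^q_t(I; L^p_x)}`. -/
def mixedNorm {E : Type*} [NormedAddCommGroup E] {n : ℕ} (I : Set ℝ) (q p : ℝ≥0∞)
    (u : ℝ → EuclideanSpace ℝ (Fin n) → E) : ℝ≥0∞ :=
  eLpNorm (fun t => (eLpNorm (u t) p volume).toReal) q (volume.restrict I)

lemma two_mul_ofReal_mul_mul_le_add {a b k u v : ℝ} (ha : 0 ≤ a) (hb : 0 ≤ b) (hu : 0 < u)
    (hv : 0 < v) :
    2 * ENNReal.ofReal (a * b * k) ≤
      ENNReal.ofReal (a ^ 2 * k * (v / u)) + ENNReal.ofReal (b ^ 2 * k * (u / v)) := by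
  rcases le_or_gt k 0 with hk | hk
  · rw [ENNReal.ofReal_of_nonpos (mul_nonpos_of_nonneg_of_nonpos (mul_nonneg ha hb) hk), mul_zero]
    exact zero_le
  have hamgm : 2 * (a * b * k) ≤ a ^ 2 * k * (v / u) + b ^ 2 * k * (u / v) := by
    rw [← sub_nonneg]
    have : a ^ 2 * k * (v / u) + b ^ 2 * k * (u / v) - 2 * (a * b * k) =
        k * (a * v - b * u) ^ 2 / (u * v) := by
      field_simp; ring
    rw [this]; positivity
  calc 2 * ENNReal.ofReal (a * b * k) = ENNReal.ofReal (2 * (a * b * k)) := by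
        rw [ENNReal.ofReal_mul zero_le_two, ENNReal.ofReal_ofNat]
    _ ≤ ENNReal.ofReal (a ^ 2 * k * (v / u) + b ^ 2 * k * (u / v)) :=
        ENNReal.ofReal_le_ofReal hamgm
    _ ≤ _ := ENNReal.ofReal_add_le

theorem lintegral_lintegral_mul_mul_kernel_le_of_schur {α : Type*} [MeasurableSpace α]
    {μ : Measure α} [SFinite μ] {K : α → α → ℝ} (hK : Measurable (Function.uncurry K))
    (hK_symm : ∀ x y, K x y = K y x) {w : α → ℝ} (hw : Measurable w) (hw_pos : ∀ᵐ x ∂μ, 0 < w x)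
    {C : ℝ≥0∞} (hC : ∀ᵐ x ∂μ, ∫⁻ y, ENNReal.ofReal (K x y * w y) ∂μ ≤ C * ENNReal.ofReal (w x))
    {f : α → ℝ} (hf : Measurable f) (hf_nonneg : ∀ x, 0 ≤ f x) :
    ∫⁻ x, ∫⁻ y, ENNReal.ofReal (f x * f y * K x y) ∂μ ∂μ ≤
      C * ∫⁻ x, ENNReal.ofReal (f x ^ 2) ∂μ := by
  let A : α → α → ℝ≥0∞ := fun x y => ENNReal.ofReal (f x ^ 2 * K x y * (w y / w x))
  have hA : Measurable (Function.uncurry A) :=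
    ENNReal.measurable_ofReal.comp ((((hf.comp measurable_fst).pow_const 2).mul hK).mul
      ((hw.comp measurable_snd).div (hw.comp measurable_fst)))
  have hpointwise : ∀ᵐ x ∂μ, ∀ᵐ y ∂μ, 2 * ENNReal.ofReal (f x * f y * K x y) ≤ A x y + A y x := by
    filter_upwards [hw_pos] with x hx
    filter_upwards [hw_pos] with y hy
    simpa only [A, hK_symm y x] using
      two_mul_ofReal_mul_mul_le_add (k := K x y) (hf_nonneg x) (hf_nonneg y) hx hy
  have hrow : ∀ᵐ x ∂μ, ∫⁻ y, A x y ∂μ ≤ C * ENNReal.ofReal (f x ^ 2) := by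
    filter_upwards [hw_pos, hC] with x hx hCx
    have hsplit : ∀ y, A x y = ENNReal.ofReal (f x ^ 2 / w x) * ENNReal.ofReal (K x y * w y) := by
      intro y
      simp only [A]
      rw [← ENNReal.ofReal_mul (by positivity)]
      congr 1
      field_simp
    simp_rw [hsplit]
    rw [lintegral_const_mul' _ _ ENNReal.ofReal_ne_top]
    calc _ ≤ ENNReal.ofReal (f x ^ 2 / w x) * (C * ENNReal.ofReal (w x)) := by gcongr
      _ = C * ENNReal.ofReal (f x ^ 2) := by
        rw [mul_left_comm, ← ENNReal.ofReal_mul (by positivity), div_mul_cancel₀ _ hx.ne']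
  refine (ENNReal.mul_le_mul_iff_right two_ne_zero ENNReal.ofNat_ne_top).mp ?_
  calc 2 * ∫⁻ x, ∫⁻ y, ENNReal.ofReal (f x * f y * K x y) ∂μ ∂μ
      = ∫⁻ x, ∫⁻ y, 2 * ENNReal.ofReal (f x * f y * K x y) ∂μ ∂μ := by
        rw [← lintegral_const_mul' _ _ ENNReal.ofNat_ne_top]
        congr 1 with x
        rw [← lintegral_const_mul' _ _ ENNReal.ofNat_ne_top]
    _ ≤ ∫⁻ x, ∫⁻ y, (A x y + A y x) ∂μ ∂μ :=
        lintegral_mono_ae (hpointwise.mono fun x hx => lintegral_mono_ae hx)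
    _ = ∫⁻ x, ∫⁻ y, A x y ∂μ ∂μ + ∫⁻ x, ∫⁻ y, A y x ∂μ ∂μ := by
        rw [← lintegral_add_left (f := fun x => ∫⁻ y, A x y ∂μ) hA.lintegral_prod_right']
        congr 1 with x
        exact lintegral_add_left (hA.comp measurable_prodMk_left) _
    _ = 2 * ∫⁻ x, ∫⁻ y, A x y ∂μ ∂μ := by
        rw [lintegral_lintegral_swap (f := fun x y => A y x) (hA.comp measurable_swap).aemeasurable,
          two_mul]
    _ ≤ 2 * ∫⁻ x, C * ENNReal.ofReal (f x ^ 2) ∂μ := by grw [lintegral_mono_ae hrow]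
    _ = 2 * (C * ∫⁻ x, ENNReal.ofReal (f x ^ 2) ∂μ) := by
        rw [lintegral_const_mul C (by fun_prop)]

lemma lintegral_Ioc_add_rpow_mul_rpow_le {a b s : ℝ} (ha : 0 ≤ a) (hb : b < 1) (hs : 0 < s) :
    ∫⁻ t in Ioc 0 s, ENNReal.ofReal ((s + t) ^ (-a) * t ^ (-b)) ≤
      ENNReal.ofReal (s ^ (1 - a - b) / (1 - b)) := by
  have hint : IntegrableOn (fun t : ℝ => s ^ (-a) * t ^ (-b)) (Ioc 0 s) :=
    ((intervalIntegrable_iff_integrableOn_Ioc_of_le hs.le).mp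
      (intervalIntegral.intervalIntegrable_rpow' (by linarith))).const_mul _
  calc ∫⁻ t in Ioc 0 s, ENNReal.ofReal ((s + t) ^ (-a) * t ^ (-b))
      ≤ ∫⁻ t in Ioc 0 s, ENNReal.ofReal (s ^ (-a) * t ^ (-b)) := by
        refine setLIntegral_mono' measurableSet_Ioc fun t ht => ENNReal.ofReal_le_ofReal ?_
        exact mul_le_mul_of_nonneg_right
          (rpow_le_rpow_of_nonpos hs (by linarith [ht.1]) (by linarith)) (rpow_nonneg ht.1.le _)
    _ = ENNReal.ofReal (∫ t in Ioc 0 s, s ^ (-a) * t ^ (-b)) := by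
        refine (ofReal_integral_eq_lintegral_ofReal hint ?_).symm
        filter_upwards [ae_restrict_mem measurableSet_Ioc] with t ht
        exact mul_nonneg (rpow_nonneg hs.le _) (rpow_nonneg ht.1.le _)
    _ = ENNReal.ofReal (s ^ (1 - a - b) / (1 - b)) := by
        rw [integral_const_mul, ← intervalIntegral.integral_of_le hs.le,
          integral_rpow (Or.inl (by linarith)), zero_rpow (by linarith), sub_zero,
          ← mul_div_assoc, ← rpow_add hs]
        ring_nf

lemma lintegral_Ioi_add_rpow_mul_rpow_le {a b s : ℝ} (ha : 0 ≤ a) (hab : 1 < a + b) (hs : 0 < s) :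
    ∫⁻ t in Ioi s, ENNReal.ofReal ((s + t) ^ (-a) * t ^ (-b)) ≤
      ENNReal.ofReal (s ^ (1 - a - b) / (a + b - 1)) := by
  have hexp : -(a + b) < -1 := by linarith
  calc ∫⁻ t in Ioi s, ENNReal.ofReal ((s + t) ^ (-a) * t ^ (-b))
      ≤ ∫⁻ t in Ioi s, ENNReal.ofReal (t ^ (-(a + b))) := by
        refine setLIntegral_mono' measurableSet_Ioi fun t ht => ENNReal.ofReal_le_ofReal ?_
        have ht0 : 0 < t := hs.trans ht
        rw [neg_add, rpow_add ht0]
        exact mul_le_mul_of_nonneg_right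
          (rpow_le_rpow_of_nonpos ht0 (by linarith) (by linarith)) (rpow_nonneg ht0.le _)
    _ = ENNReal.ofReal (∫ t in Ioi s, t ^ (-(a + b))) := by
        refine (ofReal_integral_eq_lintegral_ofReal (integrableOn_Ioi_rpow_of_lt hexp hs) ?_).symm
        filter_upwards [ae_restrict_mem measurableSet_Ioi] with t ht
        exact rpow_nonneg (hs.trans ht).le _
    _ = ENNReal.ofReal (s ^ (1 - a - b) / (a + b - 1)) := by
        rw [integral_Ioi_rpow_of_lt hexp hs, ← neg_div_neg_eq, neg_neg]
        ring_nf

lemma lintegral_Ioi_zero_add_rpow_mul_rpow_le {a b s : ℝ} (ha : 0 ≤ a) (hb : b < 1)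
    (hab : 1 < a + b) (hs : 0 < s) :
    ∫⁻ t in Ioi 0, ENNReal.ofReal ((s + t) ^ (-a) * t ^ (-b)) ≤
      ENNReal.ofReal ((1 / (1 - b) + 1 / (a + b - 1)) * s ^ (1 - a - b)) := by
  rw [← Ioc_union_Ioi_eq_Ioi hs.le, lintegral_union measurableSet_Ioi Ioc_disjoint_Ioi_same]
  calc _ ≤ ENNReal.ofReal (s ^ (1 - a - b) / (1 - b)) +
        ENNReal.ofReal (s ^ (1 - a - b) / (a + b - 1)) :=
        add_le_add (lintegral_Ioc_add_rpow_mul_rpow_le ha hb hs)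
          (lintegral_Ioi_add_rpow_mul_rpow_le ha hab hs)
    _ = _ := by
        rw [← ENNReal.ofReal_add (by positivity) (by positivity)]
        ring_nf

lemma lintegral_Ioi_kernel_mul_rpow_neg_half_le {β s : ℝ} (hβ : β < 1 / 2) (hs : 0 < s) :
    ∫⁻ t in Ioi 0, ENNReal.ofReal
        ((s + t) ^ (-(1 - 2 * β)) * s ^ (-β) * t ^ (-β) * t ^ (-(1 / 2) : ℝ)) ≤
      ENNReal.ofReal (2 / (1 / 2 - β)) * ENNReal.ofReal (s ^ (-(1 / 2) : ℝ)) := by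
  have hfactor : ∀ t ∈ Ioi (0 : ℝ), ENNReal.ofReal
      ((s + t) ^ (-(1 - 2 * β)) * s ^ (-β) * t ^ (-β) * t ^ (-(1 / 2) : ℝ)) =
      ENNReal.ofReal (s ^ (-β)) *
        ENNReal.ofReal ((s + t) ^ (-(1 - 2 * β)) * t ^ (-(β + 1 / 2))) := by
    intro t ht
    rw [← ENNReal.ofReal_mul (rpow_nonneg hs.le _), neg_add, rpow_add ht]
    ring_nf
  have hpow : s ^ (-β) * s ^ (1 - (1 - 2 * β) - (β + 1 / 2)) = s ^ (-(1 / 2) : ℝ) := by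
    rw [← rpow_add hs]
    ring_nf
  have hconst : 1 / (1 - (β + 1 / 2)) + 1 / (1 - 2 * β + (β + 1 / 2) - 1) = 2 / (1 / 2 - β) := by
    ring
  rw [setLIntegral_congr_fun measurableSet_Ioi hfactor,
    lintegral_const_mul' _ _ ENNReal.ofReal_ne_top]
  calc _ ≤ ENNReal.ofReal (s ^ (-β)) * ENNReal.ofReal ((1 / (1 - (β + 1 / 2)) +
        1 / (1 - 2 * β + (β + 1 / 2) - 1)) * s ^ (1 - (1 - 2 * β) - (β + 1 / 2))) := by
        gcongr
        exact lintegral_Ioi_zero_add_rpow_mul_rpow_le (by linarith) (by linarith) (by linarith) hs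
    _ = _ := by
        rw [← ENNReal.ofReal_mul (rpow_nonneg hs.le _),
          ← ENNReal.ofReal_mul (div_pos two_pos (by linarith)).le, hconst, mul_left_comm, hpow]

theorem stmt11_general (β : ℝ) (hβ : β < 1 / 2) :
    ∃ C > 0, ∀ g : ℝ → ℝ, Measurable g → (∀ s, 0 ≤ g s) →
      (∫⁻ s in Ioi (0 : ℝ), ∫⁻ s₁ in Ioi (0 : ℝ),
          ENNReal.ofReal
            (g s * g s₁ * (s + s₁) ^ (-(1 - 2 * β)) * s ^ (-β) * s₁ ^ (-β))) ≤
        ENNReal.ofReal C * ∫⁻ s in Ioi (0 : ℝ), ENNReal.ofReal (g s ^ 2) := by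
  refine ⟨2 / (1 / 2 - β), div_pos two_pos (by linarith), fun g hg hg_nonneg => ?_⟩
  have hpos : ∀ᵐ t ∂(volume.restrict (Ioi (0 : ℝ))), 0 < t := ae_restrict_mem measurableSet_Ioi
  have hschur := lintegral_lintegral_mul_mul_kernel_le_of_schur
    (K := fun s t => (s + t) ^ (-(1 - 2 * β)) * s ^ (-β) * t ^ (-β))
    (w := fun t => t ^ (-(1 / 2) : ℝ)) (by fun_prop) (fun s t => by rw [add_comm]; ring)
    (by fun_prop) (hpos.mono fun t ht => rpow_pos_of_pos ht _)
    (hpos.mono fun s hs => lintegral_Ioi_kernel_mul_rpow_neg_half_le hβ hs) hg hg_nonneg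
  simpa only [mul_assoc] using hschur

/-- Bilinear weighted estimate used in the TT* argument. -/
theorem stmt11 (β : ℝ) (hβ0 : 0 < β) (hβ : β < 1 / 2) :
    ∃ C > 0, ∀ g : ℝ → ℝ, Measurable g → (∀ s, 0 ≤ g s) →
      (∫⁻ s in Ioi (0 : ℝ), ∫⁻ s₁ in Ioi (0 : ℝ),
          ENNReal.ofReal
            (g s * g s₁ * (s + s₁) ^ (-(1 - 2 * β)) * s ^ (-β) * s₁ ^ (-β))) ≤
        ENNReal.ofReal C * ∫⁻ s in Ioi (0 : ℝ), ENNReal.ofReal (g s ^ 2) :=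
  stmt11_general β hβ
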